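/- arXiv:1804.06827 — 3 statements merged into one kernel-verified Lean document; each statement's English description precedes it below -/
import Mathlib

section
/- (Proposition 3, grid form.) Let P ⊆ ℤ² be a finite set whose proximity graph is connected, let p ∈ P, and let q ∉ P. Suppose that every r ∈ P \ {p} that is linked to p (Chebyshev distance from r to p equals 1) is also linked to q (Chebyshev distance from r to q equals 1). Then the proximity graph of the configuration (P \ {p}) ∪ {q} is connected. -/
/-- Chebyshev distance on the grid `ℤ²`. -/
def chebDist (p q : ℤ × ℤ) : ℤ := max |p.1 - q.1| |p.2 - q.2|

/-- The proximity graph of a configuration `P ⊆ ℤ²`: two occupied grid points are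
adjacent iff their Chebyshev distance is `1` (Moore neighborhood). -/
def proxGraph (P : Set (ℤ × ℤ)) : SimpleGraph P where
  Adj a b := chebDist a.1 b.1 = 1
  symm := by
    constructor
    intro a b h
    unfold chebDist at *
    rw [abs_sub_comm (b.1).1 (a.1).1, abs_sub_comm (b.1).2 (a.1).2]
    exact h
  loopless := by
    constructor
    intro a h
    simp [chebDist] at h

/-!
Every agent other than the one at `p` is joined to `p` by a path in the old configuration.
Follow that path up to its first visit of `p`: all earlier vertices stay in place, and the
last of them was linked to `p`, hence is linked to `q`. So every agent of the new
configuration can reach `q`.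
-/

namespace SimpleGraph

variable {V : Type*} {G : SimpleGraph V} {S : Set V} {p q : V}

theorem Walk.reachable_induce_diff_union_singleton
    (hkeep : ∀ r ∈ S \ {p}, G.Adj r p → G.Adj r q) {a b : S}
    (w : (G.induce S).Walk a b) (hb : (b : V) = p) (ha : (a : V) ≠ p) :
    (G.induce (S \ {p} ∪ {q})).Reachable ⟨a, .inl ⟨a.2, ha⟩⟩ ⟨q, .inr rfl⟩ := by
  induction w with
  | nil => exact absurd hb ha
  | @cons u v _ huv _ ih =>
    by_cases hv : (v : V) = p
    · exact Adj.reachable (G := G.induce _) (hkeep u ⟨u.2, ha⟩ (hv ▸ huv))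
    · have huv' : (G.induce (S \ {p} ∪ {q})).Adj ⟨u, .inl ⟨u.2, ha⟩⟩ ⟨v, .inl ⟨v.2, hv⟩⟩ := huv
      exact huv'.reachable.trans (ih hb hv)

theorem Connected.induce_diff_union_singleton (hconn : (G.induce S).Connected) (hp : p ∈ S)
    (hkeep : ∀ r ∈ S \ {p}, G.Adj r p → G.Adj r q) :
    (G.induce (S \ {p} ∪ {q})).Connected := by
  refine (connected_iff_exists_forall_reachable _).2 ⟨⟨q, .inr rfl⟩, fun x => Reachable.symm ?_⟩
  obtain ⟨x, hx | rfl⟩ := x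
  · obtain ⟨w⟩ := hconn.preconnected ⟨x, hx.1⟩ ⟨p, hp⟩
    exact w.reachable_induce_diff_union_singleton hkeep rfl hx.2
  · rfl

end SimpleGraph

theorem chebDist_comm (p q : ℤ × ℤ) : chebDist p q = chebDist q p := by
  simp only [chebDist, abs_sub_comm]

theorem chebDist_self (p : ℤ × ℤ) : chebDist p p = 0 := by
  simp [chebDist]

def chebGraph : SimpleGraph (ℤ × ℤ) where
  Adj a b := chebDist a b = 1
  symm := ⟨fun a b h => (chebDist_comm b a).trans h⟩
  loopless := ⟨fun a h => by simp [chebDist_self] at h⟩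

theorem proxGraph_eq_induce (P : Set (ℤ × ℤ)) : proxGraph P = chebGraph.induce P := rfl

theorem connected_after_move_grid_general
    (P : Set (ℤ × ℤ))
    (hconn : (proxGraph P).Connected)
    (p : ℤ × ℤ) (hp : p ∈ P) (q : ℤ × ℤ)
    (hkeep : ∀ r ∈ P \ {p}, chebDist r p = 1 → chebDist r q = 1) :
    (proxGraph ((P \ {p}) ∪ {q})).Connected := by
  rw [proxGraph_eq_induce] at hconn ⊢
  exact hconn.induce_diff_union_singleton hp hkeep

/-- Proposition 3 (grid form): relocating one agent from `p` to an unoccupied point `q`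
that remains linked to all of `p`'s prior neighbors preserves connectivity of the
proximity graph. -/
theorem connected_after_move_grid
    (P : Set (ℤ × ℤ)) (hfin : P.Finite)
    (hconn : (proxGraph P).Connected)
    (p : ℤ × ℤ) (hp : p ∈ P) (q : ℤ × ℤ) (hq : q ∉ P)
    (hkeep : ∀ r ∈ P \ {p}, chebDist r p = 1 → chebDist r q = 1) :
    (proxGraph ((P \ {p}) ∪ {q})).Connected :=
  connected_after_move_grid_general P hconn p hp q hkeep
end

section
/- (Unique equilibrium distance.) For any repulsion gain k_r > 0, attraction gain k_a > 0, and shift ρ_s ∈ ℝ, there exists a unique ρ_des > 0 such that v_r(ρ_des) = 0, where v_r(ρ) = −k_r/ρ + 1/(1 + exp(−k_a(ρ − ρ_s))); moreover v_r(ρ) < 0 for 0 < ρ < ρ_des and v_r(ρ) > 0 for ρ > ρ_des. -/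
/-- Unique equilibrium distance: for `k_r > 0`, `k_a > 0` and shift `ρ_s`, the
attraction–repulsion law `v_r(ρ) = −k_r/ρ + 1/(1 + exp(−k_a(ρ − ρ_s)))` has a unique
positive zero `ρ_des`; moreover `v_r < 0` on `(0, ρ_des)` and `v_r > 0` on
`(ρ_des, ∞)`. -/
theorem attractionRepulsion_unique_equilibrium (kr ka ρs : ℝ)
    (hkr : 0 < kr) (hka : 0 < ka) :
    ∃ ρdes : ℝ, 0 < ρdes ∧
      (-kr / ρdes + 1 / (1 + Real.exp (-ka * (ρdes - ρs))) = 0) ∧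
      (∀ ρ : ℝ, 0 < ρ → ρ < ρdes →
        -kr / ρ + 1 / (1 + Real.exp (-ka * (ρ - ρs))) < 0) ∧
      (∀ ρ : ℝ, ρdes < ρ →
        0 < -kr / ρ + 1 / (1 + Real.exp (-ka * (ρ - ρs)))) ∧
      (∀ ρ : ℝ, 0 < ρ →
        -kr / ρ + 1 / (1 + Real.exp (-ka * (ρ - ρs))) = 0 → ρ = ρdes) := by
  set s : ℝ → ℝ := fun ρ => (1 + Real.exp (-ka * (ρ - ρs)))⁻¹ with hs_def
  have hden : ∀ ρ : ℝ, 0 < 1 + Real.exp (-ka * (ρ - ρs)) := fun ρ => by positivity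
  have hs_pos : ∀ ρ : ℝ, 0 < s ρ := fun ρ => inv_pos.mpr (hden ρ)
  have hs_mono : StrictMono s := by
    intro a b hab
    have hexp : Real.exp (-ka * (b - ρs)) < Real.exp (-ka * (a - ρs)) := by
      apply Real.exp_lt_exp.mpr
      nlinarith
    exact inv_strictAnti₀ (hden b) (by linarith)
  set g : ℝ → ℝ := fun ρ => ρ * s ρ with hg_def
  have hg_mono : StrictMonoOn g (Set.Ici 0) := by
    intro a ha b hb hab
    have h1 : a * s a ≤ a * s b :=
      mul_le_mul_of_nonneg_left (le_of_lt (hs_mono hab)) ha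
    have h2 : a * s b < b * s b :=
      mul_lt_mul_of_pos_right hab (hs_pos b)
    exact lt_of_le_of_lt h1 h2
  have hg_cont : Continuous g := by
    apply Continuous.mul continuous_id
    apply Continuous.inv₀
    · continuity
    · intro ρ; exact ne_of_gt (hden ρ)
  set M : ℝ := max ρs (2 * kr) + 1 with hM_def
  have hM_gt_ρs : ρs < M := lt_of_le_of_lt (le_max_left _ _) (by linarith)
  have hM_gt_kr : 2 * kr < M := lt_of_le_of_lt (le_max_right _ _) (by linarith)
  have hM_pos : 0 < M := by linarith
  have hgM : kr < g M := by
    have hexp : Real.exp (-ka * (M - ρs)) < 1 := by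
      rw [Real.exp_lt_one_iff]
      nlinarith
    have hsM : (2 : ℝ)⁻¹ < s M :=
      inv_strictAnti₀ (hden M) (by linarith)
    have : (2 : ℝ)⁻¹ * (2 * kr) < s M * M := by
      apply mul_lt_mul' (le_of_lt hsM) hM_gt_kr (by positivity) (hs_pos M)
    have h2 : (2 : ℝ)⁻¹ * (2 * kr) = kr := by ring
    rw [hg_def]
    simp only
    nlinarith
  have hg0 : g 0 = 0 := by simp [hg_def]
  -- IVT
  have hkr_mem : kr ∈ Set.Icc (g 0) (g M) := by
    constructor
    · rw [hg0]; exact le_of_lt hkr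
    · exact le_of_lt hgM
  obtain ⟨c, hc_mem, hc_eq⟩ :=
    intermediate_value_Icc (le_of_lt hM_pos) hg_cont.continuousOn hkr_mem
  have hc_pos : 0 < c := by
    rcases lt_or_eq_of_le hc_mem.1 with h | h
    · exact h
    · exfalso; rw [← h] at hc_eq; rw [hg0] at hc_eq; linarith
  -- key rewriting
  have key : ∀ ρ : ℝ, 0 < ρ →
      -kr / ρ + 1 / (1 + Real.exp (-ka * (ρ - ρs))) = (g ρ - kr) / ρ := by
    intro ρ hρ
    rw [hg_def, hs_def]
    simp only
    rw [one_div]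
    field_simp
    ring
  refine ⟨c, hc_pos, ?_, ?_, ?_, ?_⟩
  · rw [key c hc_pos, hc_eq]
    simp
  · intro ρ hρ hρc
    rw [key ρ hρ]
    apply div_neg_of_neg_of_pos _ hρ
    have := hg_mono (le_of_lt hρ) (le_of_lt hc_pos) hρc
    rw [hc_eq] at this
    linarith
  · intro ρ hρc
    have hρ : 0 < ρ := lt_trans hc_pos hρc
    rw [key ρ hρ]
    apply div_pos _ hρ
    have := hg_mono (le_of_lt hc_pos) (le_of_lt hρ) hρc
    rw [hc_eq] at this
    linarith
  · intro ρ hρ heq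
    rw [key ρ hρ] at heq
    have hgρ : g ρ = kr := by
      have := div_eq_zero_iff.mp heq
      rcases this with h | h
      · linarith
      · exact absurd h (ne_of_gt hρ)
    have := hg_mono.injOn (Set.mem_Ici.mpr (le_of_lt hρ))
      (Set.mem_Ici.mpr (le_of_lt hc_pos)) (by rw [hgρ, hc_eq])
    exact this
end

section
/- (Classification of alignment equilibria.) Let v_b ≠ 0 and let v_r, β, β_des be real numbers. Then the two equations (v_r + v_b)·cos β − v_b·cos(2β_des − β) = 0 and (v_r + v_b)·sin β − v_b·sin(2β_des − β) = 0 hold simultaneously if and only if either (v_r = 0 and β = β_des + kπ for some integer k) or (v_r = −2v_b and β = β_des + π/2 + kπ for some integer k). In particular, when v_r = 0 the commanded velocity vanishes exactly when the measured bearing β agrees with the desired bearing β_des modulo π. -/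
open Real

/-- Classification of alignment equilibria: for a nonzero bearing-alignment speed
`v_b`, the commanded velocity `(v_x, v_y)` with
`v_x = (v_r + v_b)·cos β − v_b·cos(2β_des − β)` and
`v_y = (v_r + v_b)·sin β − v_b·sin(2β_des − β)` vanishes iff
either `v_r = 0` and `β = β_des + kπ`, or `v_r = −2v_b` and `β = β_des + π/2 + kπ`. -/
theorem alignment_equilibria (vb vr β βdes : ℝ) (hvb : vb ≠ 0) :
    ((vr + vb) * cos β - vb * cos (2 * βdes - β) = 0 ∧
     (vr + vb) * sin β - vb * sin (2 * βdes - β) = 0) ↔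
    ((vr = 0 ∧ ∃ k : ℤ, β = βdes + k * π) ∨
     (vr = -2 * vb ∧ ∃ k : ℤ, β = βdes + π / 2 + k * π)) := by
  have e1 : β = (β - βdes) + βdes := by ring
  have e2 : 2 * βdes - β = βdes - (β - βdes) := by ring
  have h1 : cos β = cos (β - βdes) * cos βdes - sin (β - βdes) * sin βdes := by
    conv_lhs => rw [e1, cos_add]
  have h2 : sin β = sin (β - βdes) * cos βdes + cos (β - βdes) * sin βdes := by
    conv_lhs => rw [e1, sin_add]
  have h3 : cos (2 * βdes - β) = cos βdes * cos (β - βdes) + sin βdes * sin (β - βdes) := by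
    rw [e2, cos_sub]
  have h4 : sin (2 * βdes - β) = sin βdes * cos (β - βdes) - cos βdes * sin (β - βdes) := by
    rw [e2, sin_sub]
  have pyth : sin βdes ^ 2 + cos βdes ^ 2 = 1 := sin_sq_add_cos_sq βdes
  constructor
  · rintro ⟨hx, hy⟩
    rw [h1, h3] at hx
    rw [h2, h4] at hy
    have hA : vr * cos (β - βdes) = 0 := by
      linear_combination cos βdes * hx + sin βdes * hy - vr * cos (β - βdes) * pyth
    have hB : (vr + 2 * vb) * sin (β - βdes) = 0 := by
      linear_combination (-sin βdes) * hx + cos βdes * hy -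
        (vr + 2 * vb) * sin (β - βdes) * pyth
    rcases mul_eq_zero.mp hA with hvr | hc
    · left
      refine ⟨hvr, ?_⟩
      have hs : sin (β - βdes) = 0 := by
        rcases mul_eq_zero.mp hB with h | h
        · exfalso; rw [hvr] at h; apply hvb; linarith
        · exact h
      rcases sin_eq_zero_iff.mp hs with ⟨n, hn⟩
      exact ⟨n, by linarith⟩
    · have hs2 : sin (β - βdes) ≠ 0 := by
        intro hs
        have h5 := sin_sq_add_cos_sq (β - βdes)
        rw [hs, hc] at h5; norm_num at h5
      have hvr2 : vr + 2 * vb = 0 := by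
        rcases mul_eq_zero.mp hB with h | h
        · exact h
        · exact absurd h hs2
      right
      refine ⟨by linarith, ?_⟩
      rcases cos_eq_zero_iff.mp hc with ⟨n, hn⟩
      exact ⟨n, by push_cast at hn ⊢; linarith⟩
  · rintro (⟨hvr, k, hk⟩ | ⟨hvr, k, hk⟩)
    · have hs : sin (β - βdes) = 0 := by
        have h5 : β - βdes = (k : ℝ) * π := by rw [hk]; ring
        rw [h5]; exact sin_int_mul_pi k
      rw [h1, h2, h3, h4]
      constructor <;> (rw [hvr, hs]; ring)
    · have hc : cos (β - βdes) = 0 := by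
        apply cos_eq_zero_iff.mpr
        exact ⟨k, by rw [hk]; push_cast; ring⟩
      rw [h1, h2, h3, h4]
      constructor <;> (rw [hvr, hc]; ring)
end
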